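/- arXiv:2506.12688 — 4 statements merged into one kernel-verified Lean document; each statement's English description precedes it below -/
import Mathlib

section
/- Assume φ₁, φ₂ are Schwartz functions and V is smooth with all derivatives of at most polynomial growth. Then for all pairs f = (f₁, f₂) and g = (g₁, g₂) of Schwartz functions ℝᵈ → ℂ one has ⟨𝒜f, g⟩ = ⟨f, 𝒜g⟩, ⟨𝒟f, g⟩ = ⟨f, 𝒟g⟩, and ⟨ℬf, g⟩ = -⟨f, 𝒞g⟩, i.e. 𝒜 and 𝒟 are symmetric and the adjoint of ℬ is -𝒞 with respect to the L² inner product. -/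
/- Bogoliubov-de Gennes operators for two-component BECs.
STATEMENT 1: with Schwartz data, 𝒜 and 𝒟 are symmetric and the L²-adjoint of ℬ
is -𝒞: ⟨𝒜f,g⟩ = ⟨f,𝒜g⟩, ⟨𝒟f,g⟩ = ⟨f,𝒟g⟩ and ⟨ℬf,g⟩ = -⟨f,𝒞g⟩. -/

open MeasureTheory
noncomputable section

open scoped ComplexConjugate

/-- Pairs of complex-valued functions on ℝᵈ. -/
abbrev Pair (d : ℕ) := ((Fin d → ℝ) → ℂ) × ((Fin d → ℝ) → ℂ)

/-- Partial derivative in the `i`-th coordinate direction. -/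
def pd {d : ℕ} (i : Fin d) (f : (Fin d → ℝ) → ℂ) (x : Fin d → ℝ) : ℂ :=
  fderiv ℝ f x (Pi.single i 1)

/-- The Laplacian. -/
def lap {d : ℕ} (f : (Fin d → ℝ) → ℂ) (x : Fin d → ℝ) : ℂ :=
  ∑ i : Fin d, pd i (pd i f) x

/-- The scalar operator L₁ = -(1/2)Δ + V + δ/2 + 2β₁₁|φ₁|² + β₁₂|φ₂|² - μ. -/
def L1 {d : ℕ} (β11 β12 δ μ : ℝ) (V : (Fin d → ℝ) → ℝ) (φ1 φ2 : (Fin d → ℝ) → ℂ)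
    (f : (Fin d → ℝ) → ℂ) (x : Fin d → ℝ) : ℂ :=
  -(1/2 : ℂ) * lap f x
    + ((V x + δ/2 + 2*β11*‖φ1 x‖^2 + β12*‖φ2 x‖^2 - μ : ℝ) : ℂ) * f x

/-- The scalar operator L₂ = -(1/2)Δ + V - δ/2 + β₁₂|φ₁|² + 2β₂₂|φ₂|² - μ. -/
def L2 {d : ℕ} (β22 β12 δ μ : ℝ) (V : (Fin d → ℝ) → ℝ) (φ1 φ2 : (Fin d → ℝ) → ℂ)
    (f : (Fin d → ℝ) → ℂ) (x : Fin d → ℝ) : ℂ :=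
  -(1/2 : ℂ) * lap f x
    + ((V x - δ/2 + β12*‖φ1 x‖^2 + 2*β22*‖φ2 x‖^2 - μ : ℝ) : ℂ) * f x

/-- The operator 𝒜. -/
def opA {d : ℕ} (β11 β22 β12 δ Ω μ : ℝ) (V : (Fin d → ℝ) → ℝ)
    (φ1 φ2 : (Fin d → ℝ) → ℂ) (g : Pair d) : Pair d :=
  (fun x => L1 β11 β12 δ μ V φ1 φ2 g.1 x
      + ((β12 : ℂ) * φ1 x * conj (φ2 x) + (Ω : ℂ)/2) * g.2 x,
   fun x => ((β12 : ℂ) * conj (φ1 x) * φ2 x + (Ω : ℂ)/2) * g.1 x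
      + L2 β22 β12 δ μ V φ1 φ2 g.2 x)

/-- The operator ℬ. -/
def opB {d : ℕ} (β11 β22 β12 : ℝ) (φ1 φ2 : (Fin d → ℝ) → ℂ) (g : Pair d) : Pair d :=
  (fun x => (β11 : ℂ) * (φ1 x)^2 * g.1 x + (β12 : ℂ) * φ1 x * φ2 x * g.2 x,
   fun x => (β12 : ℂ) * φ1 x * φ2 x * g.1 x + (β22 : ℂ) * (φ2 x)^2 * g.2 x)

/-- The operator 𝒞. -/
def opC {d : ℕ} (β11 β22 β12 : ℝ) (φ1 φ2 : (Fin d → ℝ) → ℂ) (g : Pair d) : Pair d :=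
  (fun x => -((β11 : ℂ) * (conj (φ1 x))^2 * g.1 x
      + (β12 : ℂ) * conj (φ1 x) * conj (φ2 x) * g.2 x),
   fun x => -((β12 : ℂ) * conj (φ1 x) * conj (φ2 x) * g.1 x
      + (β22 : ℂ) * (conj (φ2 x))^2 * g.2 x))

/-- The operator 𝒟. -/
def opD {d : ℕ} (β11 β22 β12 δ Ω μ : ℝ) (V : (Fin d → ℝ) → ℝ)
    (φ1 φ2 : (Fin d → ℝ) → ℂ) (g : Pair d) : Pair d :=
  (fun x => -(L1 β11 β12 δ μ V φ1 φ2 g.1 x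
      + ((β12 : ℂ) * conj (φ1 x) * φ2 x + (Ω : ℂ)/2) * g.2 x),
   fun x => -(((β12 : ℂ) * φ1 x * conj (φ2 x) + (Ω : ℂ)/2) * g.1 x
      + L2 β22 β12 δ μ V φ1 φ2 g.2 x))

/-- The componentwise complex conjugate of a pair. -/
def conjPair {d : ℕ} (g : Pair d) : Pair d :=
  (fun y => conj (g.1 y), fun y => conj (g.2 y))

/-- The L² inner product of pairs: ⟨f,g⟩ = Σⱼ ∫ fⱼ conj(gⱼ). -/
def inn {d : ℕ} (f g : Pair d) : ℂ :=
  (∫ x : Fin d → ℝ, f.1 x * conj (g.1 x)) + ∫ x : Fin d → ℝ, f.2 x * conj (g.2 x)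

/-! 𝒜 and 𝒟 both have the form r • Δ + M with r real and M(x) a Hermitian 2 × 2 matrix whose
entries have temperate growth, while ℬ is multiplication by a symmetric matrix M and 𝒞 by -M̄.
Integration by parts in each coordinate makes Δ symmetric on Schwartz functions, and the adjoint
of multiplication by M is pointwise multiplication by Mᴴ. All the integrals can be split because
a function of temperate growth times a Schwartz function is again a Schwartz function. -/

open SchwartzMap LineDeriv

section TemperateGrowth

variable {D : Type*} [NormedAddCommGroup D] [NormedSpace ℝ D] {f : D → ℂ}

@[fun_prop]
theorem Function.HasTemperateGrowth.conj (hf : f.HasTemperateGrowth) :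
    (fun x => conj (f x)).HasTemperateGrowth :=
  Complex.conjCLE.hasTemperateGrowth.comp hf

@[fun_prop]
theorem Function.HasTemperateGrowth.norm_sq (hf : f.HasTemperateGrowth) :
    (fun x => ‖f x‖ ^ 2).HasTemperateGrowth :=
  (hasTemperateGrowth_norm_sq ℂ).comp hf

end TemperateGrowth

def mulConjCLM : ℂ →L[ℝ] ℂ →L[ℝ] ℂ :=
  (ContinuousLinearMap.mul ℝ ℂ).bilinearComp (ContinuousLinearMap.id ℝ ℂ)
    Complex.conjCLE.toContinuousLinearMap

@[simp]
theorem mulConjCLM_apply (a b : ℂ) : mulConjCLM a b = a * conj b := rfl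

namespace SchwartzMap

variable {D : Type*} [NormedAddCommGroup D] [NormedSpace ℝ D] [MeasurableSpace D] [BorelSpace D]
  {μ : Measure D}

theorem integrable_mul_conj [SecondCountableTopology D] [μ.HasTemperateGrowth] (f g : 𝓢(D, ℂ)) :
    Integrable (fun x => f x * conj (g x)) μ :=
  (pairing mulConjCLM f g).integrable

theorem integrable_mul_mul_conj [SecondCountableTopology D] [μ.HasTemperateGrowth] {m : D → ℂ}
    (hm : m.HasTemperateGrowth) (f g : 𝓢(D, ℂ)) :
    Integrable (fun x => m x * f x * conj (g x)) μ := by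
  simpa [hm] using integrable_mul_conj (μ := μ) (smulLeftCLM ℂ m f) g

theorem integral_lineDerivOp_mul_conj [FiniteDimensional ℝ D] [μ.IsAddHaarMeasure]
    (f g : 𝓢(D, ℂ)) (v : D) :
    ∫ x, ∂_{v} f x * conj (g x) ∂μ = -∫ x, f x * conj (∂_{v} g x) ∂μ := by
  simpa using neg_eq_iff_eq_neg.mp
    (integral_bilinear_lineDerivOp_right_eq_neg_left f g mulConjCLM v (μ := μ)).symm

variable {d : ℕ}

theorem pd_eq_lineDerivOp (i : Fin d) (f : 𝓢(Fin d → ℝ, ℂ)) :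
    pd i f = (∂_{(Pi.single i 1 : Fin d → ℝ)} f : 𝓢(Fin d → ℝ, ℂ)) :=
  rfl

def coordLaplacian (f : 𝓢(Fin d → ℝ, ℂ)) : 𝓢(Fin d → ℝ, ℂ) :=
  ∑ i, ∂_{(Pi.single i 1 : Fin d → ℝ)} (∂_{(Pi.single i 1 : Fin d → ℝ)} f)

theorem coe_coordLaplacian (f : 𝓢(Fin d → ℝ, ℂ)) : ⇑(coordLaplacian f) = lap f := by
  ext x
  simp [coordLaplacian, lap, pd_eq_lineDerivOp]

theorem integral_lap_mul_conj (f g : 𝓢(Fin d → ℝ, ℂ)) :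
    ∫ x, lap f x * conj (g x) = ∫ x, f x * conj (lap g x) := by
  simp only [← coe_coordLaplacian, coordLaplacian, sum_apply, Finset.sum_mul, Finset.mul_sum,
    map_sum]
  rw [integral_finsetSum _ fun _ _ => integrable_mul_conj _ _,
    integral_finsetSum _ fun _ _ => integrable_mul_conj _ _]
  simp only [integral_lineDerivOp_mul_conj, neg_neg]

end SchwartzMap

section Pairs

variable {d : ℕ}

def IsSchwartzPair (u : Pair d) : Prop :=
  ∃ U₁ U₂ : 𝓢(Fin d → ℝ, ℂ), u = (⇑U₁, ⇑U₂)

def lapPair (g : Pair d) : Pair d :=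
  (lap g.1, lap g.2)

def mulPair (a b c e : (Fin d → ℝ) → ℂ) (g : Pair d) : Pair d :=
  (fun x => a x * g.1 x + b x * g.2 x, fun x => c x * g.1 x + e x * g.2 x)

theorem IsSchwartzPair.smul {u : Pair d} (hu : IsSchwartzPair u) (c : ℂ) :
    IsSchwartzPair (c • u) := by
  obtain ⟨U₁, U₂, rfl⟩ := hu
  exact ⟨c • U₁, c • U₂, rfl⟩

theorem IsSchwartzPair.lapPair {u : Pair d} (hu : IsSchwartzPair u) :
    IsSchwartzPair (lapPair u) := by
  obtain ⟨U₁, U₂, rfl⟩ := hu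
  exact ⟨U₁.coordLaplacian, U₂.coordLaplacian, by simp [_root_.lapPair, coe_coordLaplacian]⟩

theorem IsSchwartzPair.mulPair {a b c e : (Fin d → ℝ) → ℂ} (ha : a.HasTemperateGrowth)
    (hb : b.HasTemperateGrowth) (hc : c.HasTemperateGrowth) (he : e.HasTemperateGrowth)
    {u : Pair d} (hu : IsSchwartzPair u) : IsSchwartzPair (mulPair a b c e u) := by
  obtain ⟨U₁, U₂, rfl⟩ := hu
  refine ⟨smulLeftCLM ℂ a U₁ + smulLeftCLM ℂ b U₂, smulLeftCLM ℂ c U₁ + smulLeftCLM ℂ e U₂, ?_⟩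
  ext x <;> simp [_root_.mulPair, ha, hb, hc, he]

theorem inn_conj_symm (u v : Pair d) : inn u v = conj (inn v u) := by
  simp only [inn, map_add, ← integral_conj, map_mul, Complex.conj_conj, mul_comm]

theorem inn_smul_left (c : ℂ) (u v : Pair d) : inn (c • u) v = c * inn u v := by
  simp only [inn, Prod.smul_fst, Prod.smul_snd, Pi.smul_apply, smul_eq_mul, mul_assoc,
    integral_const_mul, mul_add]

theorem inn_smul_right (c : ℂ) (u v : Pair d) : inn u (c • v) = conj c * inn u v := by
  rw [inn_conj_symm, inn_smul_left, map_mul, ← inn_conj_symm]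

theorem inn_neg_right (u v : Pair d) : inn u (-v) = -inn u v := by
  simpa using inn_smul_right (-1) u v

theorem inn_add_left {u v w : Pair d} (hu : IsSchwartzPair u) (hv : IsSchwartzPair v)
    (hw : IsSchwartzPair w) : inn (u + v) w = inn u w + inn v w := by
  obtain ⟨U₁, U₂, rfl⟩ := hu
  obtain ⟨V₁, V₂, rfl⟩ := hv
  obtain ⟨W₁, W₂, rfl⟩ := hw
  simp only [inn, Prod.mk_add_mk, Pi.add_apply, add_mul]
  rw [integral_add (integrable_mul_conj _ _) (integrable_mul_conj _ _),
    integral_add (integrable_mul_conj _ _) (integrable_mul_conj _ _)]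
  ring

theorem inn_add_right {u v w : Pair d} (hu : IsSchwartzPair u) (hv : IsSchwartzPair v)
    (hw : IsSchwartzPair w) : inn u (v + w) = inn u v + inn u w := by
  rw [inn_conj_symm, inn_add_left hv hw hu, map_add, ← inn_conj_symm, ← inn_conj_symm]

theorem inn_lapPair {u v : Pair d} (hu : IsSchwartzPair u) (hv : IsSchwartzPair v) :
    inn (lapPair u) v = inn u (lapPair v) := by
  obtain ⟨U₁, U₂, rfl⟩ := hu
  obtain ⟨V₁, V₂, rfl⟩ := hv
  simp only [inn, lapPair, integral_lap_mul_conj]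

theorem inn_mulPair {a b c e : (Fin d → ℝ) → ℂ} (ha : a.HasTemperateGrowth)
    (hb : b.HasTemperateGrowth) (hc : c.HasTemperateGrowth) (he : e.HasTemperateGrowth)
    {u v : Pair d} (hu : IsSchwartzPair u) (hv : IsSchwartzPair v) :
    inn (mulPair a b c e u) v = inn u (mulPair (star a) (star c) (star b) (star e) v) := by
  obtain ⟨U₁, U₂, rfl⟩ := hu
  obtain ⟨V₁, V₂, rfl⟩ := hv
  have adjoint (m : (Fin d → ℝ) → ℂ) (F G : 𝓢(Fin d → ℝ, ℂ)) (x : Fin d → ℝ) :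
      F x * conj (star m x * G x) = m x * F x * conj (G x) := by
    simp only [Pi.star_apply, map_mul, Complex.star_def, Complex.conj_conj]; ring
  simp only [inn, mulPair, add_mul, map_add, mul_add, adjoint]
  rw [integral_add (integrable_mul_mul_conj ha _ _) (integrable_mul_mul_conj hb _ _),
    integral_add (integrable_mul_mul_conj hc _ _) (integrable_mul_mul_conj he _ _),
    integral_add (integrable_mul_mul_conj ha _ _) (integrable_mul_mul_conj hc _ _),
    integral_add (integrable_mul_mul_conj hb _ _) (integrable_mul_mul_conj he _ _)]
  ring

def schrodingerPair (r : ℝ) (a e : (Fin d → ℝ) → ℝ) (b : (Fin d → ℝ) → ℂ) (g : Pair d) : Pair d :=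
  (r : ℂ) • lapPair g + mulPair (fun x => a x) b (star b) (fun x => e x) g

theorem inn_schrodingerPair {r : ℝ} {a e : (Fin d → ℝ) → ℝ} {b : (Fin d → ℝ) → ℂ}
    (ha : a.HasTemperateGrowth) (he : e.HasTemperateGrowth) (hb : b.HasTemperateGrowth)
    {u v : Pair d} (hu : IsSchwartzPair u) (hv : IsSchwartzPair v) :
    inn (schrodingerPair r a e b u) v = inn u (schrodingerPair r a e b v) := by
  have ha' : (fun x => (a x : ℂ)).HasTemperateGrowth := by fun_prop
  have he' : (fun x => (e x : ℂ)).HasTemperateGrowth := by fun_prop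
  have hb' : (star b).HasTemperateGrowth := hb.conj
  have hM {w : Pair d} (hw : IsSchwartzPair w) := hw.mulPair ha' hb hb' he'
  rw [schrodingerPair, schrodingerPair, inn_add_left ((hu.lapPair).smul _) (hM hu) hv,
    inn_add_right hu ((hv.lapPair).smul _) (hM hv), inn_smul_left, inn_smul_right,
    Complex.conj_ofReal, inn_lapPair hu hv, inn_mulPair ha' hb hb' he' hu hv, star_star]
  congr 3 <;> ext x <;> simp

theorem opA_eq_schrodingerPair (β11 β22 β12 δ Ω μ : ℝ) (V : (Fin d → ℝ) → ℝ)
    (φ1 φ2 : (Fin d → ℝ) → ℂ) :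
    opA β11 β22 β12 δ Ω μ V φ1 φ2 = schrodingerPair (-1/2)
      (fun x => V x + δ/2 + 2*β11*‖φ1 x‖^2 + β12*‖φ2 x‖^2 - μ)
      (fun x => V x - δ/2 + β12*‖φ1 x‖^2 + 2*β22*‖φ2 x‖^2 - μ)
      (fun x => β12 * φ1 x * conj (φ2 x) + Ω/2) := by
  ext g x <;>
  · simp only [opA, L1, L2, schrodingerPair, lapPair, mulPair, Prod.smul_mk, Prod.mk_add_mk,
      Pi.add_apply, Pi.smul_apply, Pi.star_apply, smul_eq_mul, Complex.star_def, map_add, map_mul,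
      map_div₀, map_ofNat, Complex.conj_conj, Complex.conj_ofReal]
    push_cast
    ring

theorem opD_eq_schrodingerPair (β11 β22 β12 δ Ω μ : ℝ) (V : (Fin d → ℝ) → ℝ)
    (φ1 φ2 : (Fin d → ℝ) → ℂ) :
    opD β11 β22 β12 δ Ω μ V φ1 φ2 = schrodingerPair (1/2)
      (fun x => -(V x + δ/2 + 2*β11*‖φ1 x‖^2 + β12*‖φ2 x‖^2 - μ))
      (fun x => -(V x - δ/2 + β12*‖φ1 x‖^2 + 2*β22*‖φ2 x‖^2 - μ))
      (fun x => -(β12 * conj (φ1 x) * φ2 x + Ω/2)) := by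
  ext g x <;>
  · simp only [opD, L1, L2, schrodingerPair, lapPair, mulPair, Prod.smul_mk, Prod.mk_add_mk,
      Pi.add_apply, Pi.smul_apply, Pi.star_apply, smul_eq_mul, Complex.star_def, map_add, map_mul,
      map_neg, map_div₀, map_ofNat, Complex.conj_conj, Complex.conj_ofReal]
    push_cast
    ring

theorem opB_eq_mulPair (β11 β22 β12 : ℝ) (φ1 φ2 : (Fin d → ℝ) → ℂ) :
    opB β11 β22 β12 φ1 φ2 = mulPair (fun x => β11 * φ1 x ^ 2) (fun x => β12 * φ1 x * φ2 x)
      (fun x => β12 * φ1 x * φ2 x) (fun x => β22 * φ2 x ^ 2) := by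
  ext g x <;> simp [opB, mulPair]

theorem opC_eq_neg_mulPair (β11 β22 β12 : ℝ) (φ1 φ2 : (Fin d → ℝ) → ℂ) (g : Pair d) :
    opC β11 β22 β12 φ1 φ2 g = -mulPair (star fun x => β11 * φ1 x ^ 2)
      (star fun x => β12 * φ1 x * φ2 x) (star fun x => β12 * φ1 x * φ2 x)
      (star fun x => β22 * φ2 x ^ 2) g := by
  ext x <;> simp [opC, mulPair]

end Pairs

theorem opA_opD_symmetric_opB_adjoint_neg_opC_general
    {d : ℕ} (β11 β22 β12 δ Ω μ : ℝ) (V : (Fin d → ℝ) → ℝ)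
    (hV : Function.HasTemperateGrowth V)
    (φ1 φ2 : SchwartzMap (Fin d → ℝ) ℂ)
    (f1 f2 g1 g2 : SchwartzMap (Fin d → ℝ) ℂ) :
    inn (opA β11 β22 β12 δ Ω μ V ⇑φ1 ⇑φ2 (⇑f1, ⇑f2)) (⇑g1, ⇑g2)
        = inn (⇑f1, ⇑f2) (opA β11 β22 β12 δ Ω μ V ⇑φ1 ⇑φ2 (⇑g1, ⇑g2))
    ∧ inn (opD β11 β22 β12 δ Ω μ V ⇑φ1 ⇑φ2 (⇑f1, ⇑f2)) (⇑g1, ⇑g2)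
        = inn (⇑f1, ⇑f2) (opD β11 β22 β12 δ Ω μ V ⇑φ1 ⇑φ2 (⇑g1, ⇑g2))
    ∧ inn (opB β11 β22 β12 ⇑φ1 ⇑φ2 (⇑f1, ⇑f2)) (⇑g1, ⇑g2)
        = -(inn (⇑f1, ⇑f2) (opC β11 β22 β12 ⇑φ1 ⇑φ2 (⇑g1, ⇑g2))) := by
  have hφ1 := φ1.hasTemperateGrowth
  have hφ2 := φ2.hasTemperateGrowth
  have hf : IsSchwartzPair (⇑f1, ⇑f2) := ⟨f1, f2, rfl⟩
  have hg : IsSchwartzPair (⇑g1, ⇑g2) := ⟨g1, g2, rfl⟩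
  refine ⟨?_, ?_, ?_⟩
  · rw [opA_eq_schrodingerPair]
    exact inn_schrodingerPair (by fun_prop) (by fun_prop) (by fun_prop) hf hg
  · rw [opD_eq_schrodingerPair]
    exact inn_schrodingerPair (by fun_prop) (by fun_prop) (by fun_prop) hf hg
  · rw [opB_eq_mulPair, opC_eq_neg_mulPair, inn_neg_right, neg_neg]
    exact inn_mulPair (by fun_prop) (by fun_prop) (by fun_prop) (by fun_prop) hf hg

theorem opA_opD_symmetric_opB_adjoint_neg_opC
    {d : ℕ} (hd : 1 ≤ d) (β11 β22 β12 δ Ω μ : ℝ) (V : (Fin d → ℝ) → ℝ)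
    (hV : Function.HasTemperateGrowth V)
    (φ1 φ2 : SchwartzMap (Fin d → ℝ) ℂ)
    (f1 f2 g1 g2 : SchwartzMap (Fin d → ℝ) ℂ) :
    inn (opA β11 β22 β12 δ Ω μ V ⇑φ1 ⇑φ2 (⇑f1, ⇑f2)) (⇑g1, ⇑g2)
        = inn (⇑f1, ⇑f2) (opA β11 β22 β12 δ Ω μ V ⇑φ1 ⇑φ2 (⇑g1, ⇑g2))
    ∧ inn (opD β11 β22 β12 δ Ω μ V ⇑φ1 ⇑φ2 (⇑f1, ⇑f2)) (⇑g1, ⇑g2)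
        = inn (⇑f1, ⇑f2) (opD β11 β22 β12 δ Ω μ V ⇑φ1 ⇑φ2 (⇑g1, ⇑g2))
    ∧ inn (opB β11 β22 β12 ⇑φ1 ⇑φ2 (⇑f1, ⇑f2)) (⇑g1, ⇑g2)
        = -(inn (⇑f1, ⇑f2) (opC β11 β22 β12 ⇑φ1 ⇑φ2 (⇑g1, ⇑g2))) :=
  opA_opD_symmetric_opB_adjoint_neg_opC_general β11 β22 β12 δ Ω μ V hV φ1 φ2 f1 f2 g1 g2
end
end

section
/- Let V be the harmonic potential V(x) = (1/2)Σ_{j=1}^d γ_j² x_j² with γ_j > 0, and suppose the smooth pair Φ = (φ₁, φ₂) together with μ ∈ ℝ solves the stationary coupled Gross–Pitaevskii equations. Fix a coordinate direction σ ∈ {1, …, d} and define the pairs U = (∂_σφ₁ - γ_σ x_σ φ₁, ∂_σφ₂ - γ_σ x_σ φ₂) and W = (∂_σconj(φ₁) + γ_σ x_σ conj(φ₁), ∂_σconj(φ₂) + γ_σ x_σ conj(φ₂)). Then (U, W) satisfies the Bogoliubov–de Gennes equations with eigenvalue γ_σ, i.e. pointwise on ℝᵈ: 𝒜U + ℬW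 = γ_σ U and 𝒞U + 𝒟W = γ_σ W. -/
/- STATEMENT 7: analytical BdG eigenpairs in a harmonic trap: if (φ₁,φ₂,μ)
solves the stationary coupled GPEs, then
U = ∂_σΦ - γ_σ x_σ Φ, W = ∂_σ conj(Φ) + γ_σ x_σ conj(Φ)
solves the BdG equations with eigenvalue γ_σ. -/

noncomputable section

open scoped ComplexConjugate

/-! ### Auxiliary differential-calculus lemmas -/

@[fun_prop] lemma differentiableAt_conj_comp' {E : Type*} [NormedAddCommGroup E]
    [NormedSpace ℝ E] {f : E → ℂ} {x : E} (hf : DifferentiableAt ℝ f x) :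
    DifferentiableAt ℝ (fun y => conj (f y)) x :=
  (Complex.conjCLE.toContinuousLinearMap.differentiableAt).comp x hf

@[fun_prop] lemma differentiableAt_ofReal_comp' {E : Type*} [NormedAddCommGroup E]
    [NormedSpace ℝ E] {f : E → ℝ} {x : E} (hf : DifferentiableAt ℝ f x) :
    DifferentiableAt ℝ (fun y => ((f y : ℝ) : ℂ)) x :=
  Complex.ofRealCLM.differentiableAt.comp x hf

variable {d : ℕ}

lemma pd_smooth {f : (Fin d → ℝ) → ℂ} (hf : ContDiff ℝ (⊤ : ℕ∞) f) (i : Fin d) :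
    ContDiff ℝ (⊤ : ℕ∞) (pd i f) :=
  (hf.fderiv_right (by simp)).clm_apply contDiff_const

lemma lap_smooth {f : (Fin d → ℝ) → ℂ} (hf : ContDiff ℝ (⊤ : ℕ∞) f) :
    ContDiff ℝ (⊤ : ℕ∞) (lap f) := by
  have h : lap f = fun x => ∑ i, pd i (pd i f) x := rfl
  rw [h]
  exact ContDiff.sum fun i _ => pd_smooth (pd_smooth hf i) i

lemma pd_add {f g : (Fin d → ℝ) → ℂ} {x} (i : Fin d) (hf : DifferentiableAt ℝ f x)
    (hg : DifferentiableAt ℝ g x) :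
    pd i (fun y => f y + g y) x = pd i f x + pd i g x := by
  simp [pd, fderiv_fun_add hf hg]

lemma pd_const {x : Fin d → ℝ} (i : Fin d) (c : ℂ) :
    pd i (fun _ : Fin d → ℝ => c) x = 0 := by
  simp [pd]

lemma pd_const_mul {f : (Fin d → ℝ) → ℂ} {x} (i : Fin d) (c : ℂ)
    (hf : DifferentiableAt ℝ f x) :
    pd i (fun y => c * f y) x = c * pd i f x := by
  simp [pd, fderiv_const_mul hf c]

lemma pd_mul {f g : (Fin d → ℝ) → ℂ} {x} (i : Fin d) (hf : DifferentiableAt ℝ f x)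
    (hg : DifferentiableAt ℝ g x) :
    pd i (fun y => f y * g y) x = pd i f x * g x + f x * pd i g x := by
  simp [pd, fderiv_fun_mul hf hg]; ring

lemma pd_sq {f : (Fin d → ℝ) → ℂ} {x} (i : Fin d) (hf : DifferentiableAt ℝ f x) :
    pd i (fun y => (f y)^2) x = 2 * f x * pd i f x := by
  have h : (fun y => (f y)^2) = fun y => f y * f y := by funext y; ring
  rw [h, pd_mul i hf hf]; ring

lemma pd_conj {f : (Fin d → ℝ) → ℂ} {x} (i : Fin d) (hf : DifferentiableAt ℝ f x) :
    pd i (fun y => conj (f y)) x = conj (pd i f x) := by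
  have h : HasFDerivAt (fun y => conj (f y))
      ((Complex.conjCLE.toContinuousLinearMap).comp (fderiv ℝ f x)) x :=
    (Complex.conjCLE.toContinuousLinearMap.hasFDerivAt (x := f x)).comp x hf.hasFDerivAt
  simp only [pd, h.fderiv]
  rfl

lemma pd_coord {x : Fin d → ℝ} (i j : Fin d) :
    pd i (fun y : Fin d → ℝ => ((y j : ℝ) : ℂ)) x
      = (((Pi.single i (1:ℝ) : Fin d → ℝ) j : ℝ) : ℂ) := by
  have h : HasFDerivAt (fun y : Fin d → ℝ => ((y j : ℝ) : ℂ))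
      (Complex.ofRealCLM.comp (ContinuousLinearMap.proj (R := ℝ) (φ := fun _ : Fin d => ℝ) j)) x :=
    (Complex.ofRealCLM.hasFDerivAt (x := x j)).comp x
      (ContinuousLinearMap.proj (R := ℝ) (φ := fun _ : Fin d => ℝ) j).hasFDerivAt
  simp only [pd, h.fderiv]
  rfl

lemma pd_sum {ι : Type*} {s : Finset ι} {f : ι → (Fin d → ℝ) → ℂ} {x} (i : Fin d)
    (hf : ∀ j ∈ s, DifferentiableAt ℝ (f j) x) :
    pd i (fun y => ∑ j ∈ s, f j y) x = ∑ j ∈ s, pd i (f j) x := by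
  simp [pd, fderiv_fun_sum hf]

lemma pd_pd_comm {f : (Fin d → ℝ) → ℂ} (hf : ContDiff ℝ (⊤ : ℕ∞) f) (i j : Fin d) (x : Fin d → ℝ) :
    pd i (pd j f) x = pd j (pd i f) x := by
  have hsymm := hf.contDiffAt.isSymmSndFDerivAt (n := (⊤ : ℕ∞)) (by rw [minSmoothness_of_isRCLikeNormedField]; exact WithTop.coe_le_coe.mpr (le_top : (2 : ℕ∞) ≤ ⊤)) (x := x)
  have key : ∀ (a b : Fin d), pd a (pd b f) x
      = fderiv ℝ (fderiv ℝ f) x (Pi.single a 1) (Pi.single b 1) := by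
    intro a b
    have hdiff : DifferentiableAt ℝ (fderiv ℝ f) x :=
      ((hf.fderiv_right (m := 1) (by exact WithTop.coe_le_coe.mpr le_top)).differentiable one_ne_zero).differentiableAt
    have h2 : pd b f = fun y => fderiv ℝ f y (Pi.single b 1) := rfl
    rw [pd, h2, fderiv_clm_apply hdiff (differentiableAt_const _)]
    simp
  rw [key, key, hsymm]

lemma pd_lap_comm {f : (Fin d → ℝ) → ℂ} (hf : ContDiff ℝ (⊤ : ℕ∞) f) (σ : Fin d) (x : Fin d → ℝ) :
    pd σ (lap f) x = lap (pd σ f) x := by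
  have h1 : lap f = fun y => ∑ i, pd i (pd i f) y := rfl
  rw [h1, pd_sum σ (fun j _ =>
    ((pd_smooth (pd_smooth hf j) j).differentiable (by simp)).differentiableAt)]
  unfold lap
  refine Finset.sum_congr rfl fun i _ => ?_
  have hfun : pd σ (pd i f) = pd i (pd σ f) :=
    funext fun y => pd_pd_comm hf σ i y
  rw [pd_pd_comm (pd_smooth hf i) σ i x, hfun]

lemma lap_conj {f : (Fin d → ℝ) → ℂ} (hf : ContDiff ℝ (⊤ : ℕ∞) f) (x : Fin d → ℝ) :
    lap (fun y => conj (f y)) x = conj (lap f x) := by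
  unfold lap
  rw [map_sum]
  refine Finset.sum_congr rfl fun i _ => ?_
  have hfun : pd i (fun y => conj (f y)) = fun y => conj (pd i f y) :=
    funext fun y => pd_conj i ((hf.differentiable (by simp)).differentiableAt)
  rw [hfun, pd_conj i (((pd_smooth hf i).differentiable (by simp)).differentiableAt)]

lemma lap_shift {f : (Fin d → ℝ) → ℂ} (hf : ContDiff ℝ (⊤ : ℕ∞) f) (a : ℝ) (ε : ℂ) (σ : Fin d)
    (x : Fin d → ℝ) :
    lap (fun y => pd σ f y + ε * ((a * y σ : ℝ) : ℂ) * f y) x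
      = lap (pd σ f) x + ε * ((a * x σ : ℝ) : ℂ) * lap f x + ε * 2 * a * pd σ f x := by
  have hdf : Differentiable ℝ f := hf.differentiable (by simp)
  have hdσ : Differentiable ℝ (pd σ f) := (pd_smooth hf σ).differentiable (by simp)
  have hcast : (fun y : Fin d → ℝ => pd σ f y + ε * ((a * y σ : ℝ):ℂ) * f y)
      = fun y => pd σ f y + (ε * (a:ℂ)) * (((y σ : ℝ):ℂ) * f y) := by
    funext y; push_cast; ring
  rw [hcast]
  have step1 : ∀ i : Fin d, pd i (fun y => pd σ f y + (ε * (a:ℂ)) * (((y σ : ℝ):ℂ) * f y))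
      = fun y => pd i (pd σ f) y
          + (ε * (a:ℂ)) * ((((Pi.single i (1:ℝ) : Fin d → ℝ) σ : ℝ):ℂ) * f y
              + ((y σ:ℝ):ℂ) * pd i f y) := by
    intro i; funext y
    have hdi : Differentiable ℝ (pd i f) := (pd_smooth hf i).differentiable (by simp)
    have hdσi : Differentiable ℝ (pd i (pd σ f)) :=
      (pd_smooth (pd_smooth hf σ) i).differentiable (by simp)
    simp (disch := fun_prop) only [pd_add, pd_const_mul, pd_mul, pd_coord]
  have step2 : ∀ i : Fin d,
      pd i (pd i (fun y => pd σ f y + (ε * (a:ℂ)) * (((y σ : ℝ):ℂ) * f y))) x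
      = pd i (pd i (pd σ f)) x
        + (ε * (a:ℂ)) * (2 * (((Pi.single i (1:ℝ) : Fin d → ℝ) σ : ℝ):ℂ) * pd i f x
            + ((x σ:ℝ):ℂ) * pd i (pd i f) x) := by
    intro i
    have hdi : Differentiable ℝ (pd i f) := (pd_smooth hf i).differentiable (by simp)
    have hdii : Differentiable ℝ (pd i (pd i f)) :=
      (pd_smooth (pd_smooth hf i) i).differentiable (by simp)
    have hdσi : Differentiable ℝ (pd i (pd σ f)) :=
      (pd_smooth (pd_smooth hf σ) i).differentiable (by simp)
    rw [step1 i]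
    simp (disch := fun_prop) only [pd_add, pd_const_mul, pd_mul, pd_coord, pd_const]
    ring
  have hlap : lap (fun y => pd σ f y + (ε * (a:ℂ)) * (((y σ : ℝ):ℂ) * f y)) x
      = ∑ i, pd i (pd i (fun y => pd σ f y + (ε * (a:ℂ)) * (((y σ : ℝ):ℂ) * f y))) x := rfl
  rw [hlap, Finset.sum_congr rfl (fun i _ => step2 i)]
  have hpick : ∑ i : Fin d, (((Pi.single i (1:ℝ) : Fin d → ℝ) σ : ℝ):ℂ) * pd i f x
      = pd σ f x := by
    simp [Pi.single_apply, apply_ite (Complex.ofReal), ite_mul, Finset.sum_ite_eq]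
  rw [Finset.sum_add_distrib, ← Finset.mul_sum]
  have hlap2 : ∑ i : Fin d, pd i (pd i (pd σ f)) x = lap (pd σ f) x := rfl
  have hlap3 : ∑ i : Fin d, pd i (pd i f) x = lap f x := rfl
  have hsum : ∑ i : Fin d, (2 * (((Pi.single i (1:ℝ) : Fin d → ℝ) σ : ℝ):ℂ) * pd i f x
      + ((x σ:ℝ):ℂ) * pd i (pd i f) x)
      = 2 * pd σ f x + ((x σ:ℝ):ℂ) * lap f x := by
    rw [Finset.sum_add_distrib, ← Finset.mul_sum, hlap3]
    congr 1
    rw [← hpick, Finset.mul_sum]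
    exact Finset.sum_congr rfl fun i _ => by ring
  rw [hsum, hlap2]
  push_cast
  ring

lemma lap_U {f : (Fin d → ℝ) → ℂ} (hf : ContDiff ℝ (⊤ : ℕ∞) f) (a : ℝ) (σ : Fin d)
    (x : Fin d → ℝ) :
    lap (fun y => pd σ f y - ((a * y σ : ℝ) : ℂ) * f y) x
      = lap (pd σ f) x - ((a * x σ : ℝ) : ℂ) * lap f x - 2 * a * pd σ f x := by
  have e0 : (fun y : Fin d → ℝ => pd σ f y - ((a * y σ : ℝ):ℂ) * f y)
      = fun y => pd σ f y + (-1 : ℂ) * ((a * y σ : ℝ):ℂ) * f y := by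
    funext y; ring
  rw [e0, lap_shift hf a (-1) σ x]; ring

lemma lap_W {f : (Fin d → ℝ) → ℂ} (hf : ContDiff ℝ (⊤ : ℕ∞) f) (a : ℝ) (σ : Fin d)
    (x : Fin d → ℝ) :
    lap (fun y => pd σ (fun z => conj (f z)) y + ((a * y σ : ℝ) : ℂ) * conj (f y)) x
      = conj (lap (pd σ f) x + ((a * x σ : ℝ) : ℂ) * lap f x + 2 * a * pd σ f x) := by
  have hdf : Differentiable ℝ f := hf.differentiable (by simp)
  have e0 : (fun y : Fin d → ℝ => pd σ (fun z => conj (f z)) y + ((a * y σ : ℝ):ℂ) * conj (f y))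
      = fun y => conj (pd σ f y + ((a * y σ : ℝ):ℂ) * f y) := by
    funext y
    rw [map_add, map_mul, Complex.conj_ofReal, pd_conj σ hdf.differentiableAt]
  have hsm : ContDiff ℝ (⊤ : ℕ∞) (fun y : Fin d → ℝ => pd σ f y + ((a * y σ : ℝ):ℂ) * f y) := by
    refine (pd_smooth hf σ).add (ContDiff.mul ?_ hf)
    exact Complex.ofRealCLM.contDiff.comp
      (contDiff_const.mul (ContinuousLinearMap.proj (R := ℝ) (φ := fun _ : Fin d => ℝ) σ).contDiff)
  have e1 : (fun y : Fin d → ℝ => pd σ f y + ((a * y σ : ℝ):ℂ) * f y)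
      = fun y => pd σ f y + (1 : ℂ) * ((a * y σ : ℝ):ℂ) * f y := by
    funext y; ring
  rw [e0, lap_conj hsm x, e1, lap_shift hf a 1 σ x]
  ring_nf

lemma pd_GPE {f g F G : (Fin d → ℝ) → ℂ} (hf : ContDiff ℝ (⊤ : ℕ∞) f) (hg : ContDiff ℝ (⊤ : ℕ∞) g)
    (hF : ContDiff ℝ (⊤ : ℕ∞) F) (hG : ContDiff ℝ (⊤ : ℕ∞) G) (γ : Fin d → ℝ)
    (b1 b2 C w μ : ℂ) (σ : Fin d) (x : Fin d → ℝ)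
    (heq : ∀ y, μ * f y = -(1/2 : ℂ) * lap f y
        + ((1/2:ℂ) * ∑ j, ((γ j : ℝ):ℂ)^2 * ((y j : ℝ):ℂ)^2 + C
            + b1 * (f y * F y) + b2 * (g y * G y)) * f y + w * g y) :
    μ * pd σ f x = -(1/2 : ℂ) * lap (pd σ f) x
      + (((γ σ : ℝ):ℂ)^2 * ((x σ : ℝ):ℂ)
          + b1 * (pd σ f x * F x + f x * pd σ F x)
          + b2 * (pd σ g x * G x + g x * pd σ G x)) * f x
      + ((1/2:ℂ) * ∑ j, ((γ j : ℝ):ℂ)^2 * ((x j : ℝ):ℂ)^2 + C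
          + b1 * (f x * F x) + b2 * (g x * G x)) * pd σ f x
      + w * pd σ g x := by
  have hdf : Differentiable ℝ f := hf.differentiable (by simp)
  have hdg : Differentiable ℝ g := hg.differentiable (by simp)
  have hdF : Differentiable ℝ F := hF.differentiable (by simp)
  have hdG : Differentiable ℝ G := hG.differentiable (by simp)
  have hdlf : Differentiable ℝ (lap f) := (lap_smooth hf).differentiable (by simp)
  have hfun : (fun y => μ * f y) = (fun y => -(1/2 : ℂ) * lap f y
      + ((1/2:ℂ) * ∑ j, ((γ j : ℝ):ℂ)^2 * ((y j : ℝ):ℂ)^2 + C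
          + b1 * (f y * F y) + b2 * (g y * G y)) * f y + w * g y) := funext heq
  have h0 : pd σ (fun y => μ * f y) x = μ * pd σ f x :=
    pd_const_mul σ μ hdf.differentiableAt
  rw [← h0, hfun]
  simp (disch := intros; fun_prop) only [pd_add, pd_const_mul, pd_mul, pd_sq, pd_coord,
    pd_const, pd_sum]
  rw [pd_lap_comm hf σ x]
  have hcol : ∀ c : Fin d → ℂ,
      ∑ j, c j * (2 * ((x j : ℝ):ℂ) * (((Pi.single σ (1:ℝ) : Fin d → ℝ) j : ℝ):ℂ))
      = 2 * c σ * ((x σ : ℝ):ℂ) := by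
    intro c
    have hterm : ∀ j : Fin d,
        c j * (2 * ((x j : ℝ):ℂ) * (((Pi.single σ (1:ℝ) : Fin d → ℝ) j : ℝ):ℂ))
        = if j = σ then 2 * c σ * ((x σ : ℝ):ℂ) else 0 := by
      intro j
      by_cases h : j = σ
      · subst h; simp [Pi.single_apply]; ring
      · simp [Pi.single_apply, h]
    rw [Finset.sum_congr rfl fun j _ => hterm j]
    simp
  rw [hcol (fun j => ((γ j : ℝ):ℂ)^2)]
  ring


theorem harmonic_trap_analytical_eigenpair
    {d : ℕ} (hd : 1 ≤ d) (β11 β22 β12 δ Ω μ : ℝ)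
    (γ : Fin d → ℝ) (hγ : ∀ j, 0 < γ j)
    (V : (Fin d → ℝ) → ℝ)
    (hV : V = fun x => (1/2 : ℝ) * ∑ j, (γ j)^2 * (x j)^2)
    (φ1 φ2 : (Fin d → ℝ) → ℂ) (hφ1 : ContDiff ℝ (⊤ : ℕ∞) φ1) (hφ2 : ContDiff ℝ (⊤ : ℕ∞) φ2)
    (hGPE1 : ∀ x, (μ : ℂ) * φ1 x = -(1/2 : ℂ) * lap φ1 x
        + ((V x + δ/2 + β11*‖φ1 x‖^2 + β12*‖φ2 x‖^2 : ℝ) : ℂ) * φ1 x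
        + ((Ω : ℂ)/2) * φ2 x)
    (hGPE2 : ∀ x, (μ : ℂ) * φ2 x = -(1/2 : ℂ) * lap φ2 x
        + ((V x - δ/2 + β12*‖φ1 x‖^2 + β22*‖φ2 x‖^2 : ℝ) : ℂ) * φ2 x
        + ((Ω : ℂ)/2) * φ1 x)
    (σ : Fin d) (U W : Pair d)
    (hU : U = (fun x => pd σ φ1 x - ((γ σ * x σ : ℝ) : ℂ) * φ1 x,
               fun x => pd σ φ2 x - ((γ σ * x σ : ℝ) : ℂ) * φ2 x))
    (hW : W = (fun x => pd σ (fun y => conj (φ1 y)) x + ((γ σ * x σ : ℝ) : ℂ) * conj (φ1 x),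
               fun x => pd σ (fun y => conj (φ2 y)) x + ((γ σ * x σ : ℝ) : ℂ) * conj (φ2 x))) :
    ∀ x : Fin d → ℝ,
      (opA β11 β22 β12 δ Ω μ V φ1 φ2 U).1 x + (opB β11 β22 β12 φ1 φ2 W).1 x
          = ((γ σ : ℝ) : ℂ) * U.1 x
      ∧ (opA β11 β22 β12 δ Ω μ V φ1 φ2 U).2 x + (opB β11 β22 β12 φ1 φ2 W).2 x
          = ((γ σ : ℝ) : ℂ) * U.2 x
      ∧ (opC β11 β22 β12 φ1 φ2 U).1 x + (opD β11 β22 β12 δ Ω μ V φ1 φ2 W).1 x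
          = ((γ σ : ℝ) : ℂ) * W.1 x
      ∧ (opC β11 β22 β12 φ1 φ2 U).2 x + (opD β11 β22 β12 δ Ω μ V φ1 φ2 W).2 x
          = ((γ σ : ℝ) : ℂ) * W.2 x := by
  have hns2 : ∀ z : ℂ, ((‖z‖ : ℝ) : ℂ)^2 = z * conj z := by
    intro z
    rw [← Complex.ofReal_pow, Complex.sq_norm]
    exact (Complex.mul_conj z).symm
  subst hV hU hW
  have hdφ1 : Differentiable ℝ φ1 := hφ1.differentiable (by simp)
  have hdφ2 : Differentiable ℝ φ2 := hφ2.differentiable (by simp)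
  have hψ1 : ContDiff ℝ (⊤ : ℕ∞) (fun y => conj (φ1 y)) :=
    Complex.conjCLE.toContinuousLinearMap.contDiff.comp hφ1
  have hψ2 : ContDiff ℝ (⊤ : ℕ∞) (fun y => conj (φ2 y)) :=
    Complex.conjCLE.toContinuousLinearMap.contDiff.comp hφ2
  have key1 : ∀ y, (μ : ℂ) * φ1 y = -(1/2 : ℂ) * lap φ1 y
      + ((1/2:ℂ) * ∑ j, ((γ j : ℝ):ℂ)^2 * ((y j : ℝ):ℂ)^2 + ((δ:ℝ):ℂ)/2
          + ((β11:ℝ):ℂ) * (φ1 y * conj (φ1 y)) + ((β12:ℝ):ℂ) * (φ2 y * conj (φ2 y))) * φ1 y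
      + ((Ω : ℂ)/2) * φ2 y := by
    intro y
    rw [hGPE1 y]
    push_cast [hns2]
    ring
  have key2 : ∀ y, (μ : ℂ) * φ2 y = -(1/2 : ℂ) * lap φ2 y
      + ((1/2:ℂ) * ∑ j, ((γ j : ℝ):ℂ)^2 * ((y j : ℝ):ℂ)^2 + (-(((δ:ℝ):ℂ)/2))
          + ((β22:ℝ):ℂ) * (φ2 y * conj (φ2 y)) + ((β12:ℝ):ℂ) * (φ1 y * conj (φ1 y))) * φ2 y
      + ((Ω : ℂ)/2) * φ1 y := by
    intro y
    rw [hGPE2 y]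
    push_cast [hns2]
    ring
  intro x
  have h1d := pd_GPE (f := φ1) (g := φ2) (F := fun y => conj (φ1 y)) (G := fun y => conj (φ2 y))
    hφ1 hφ2 hψ1 hψ2 γ ((β11:ℝ):ℂ) ((β12:ℝ):ℂ) (((δ:ℝ):ℂ)/2) ((Ω:ℂ)/2) ((μ:ℝ):ℂ) σ x key1
  have h2d := pd_GPE (f := φ2) (g := φ1) (F := fun y => conj (φ2 y)) (G := fun y => conj (φ1 y))
    hφ2 hφ1 hψ2 hψ1 γ ((β22:ℝ):ℂ) ((β12:ℝ):ℂ) (-(((δ:ℝ):ℂ)/2)) ((Ω:ℂ)/2) ((μ:ℝ):ℂ) σ x key2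
  simp only [pd_conj σ hdφ1.differentiableAt, pd_conj σ hdφ2.differentiableAt] at h1d h2d
  refine ⟨?_, ?_, ?_, ?_⟩
  · simp only [opA, opB, L1]
    rw [lap_U hφ1 (γ σ) σ x]
    rw [pd_conj σ hdφ1.differentiableAt, pd_conj σ hdφ2.differentiableAt]
    push_cast [hns2]
    linear_combination (-1 : ℂ) * h1d + ((γ σ : ℝ):ℂ) * ((x σ : ℝ):ℂ) * key1 x
  · simp only [opA, opB, L2]
    rw [lap_U hφ2 (γ σ) σ x]
    rw [pd_conj σ hdφ1.differentiableAt, pd_conj σ hdφ2.differentiableAt]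
    push_cast [hns2]
    linear_combination (-1 : ℂ) * h2d + ((γ σ : ℝ):ℂ) * ((x σ : ℝ):ℂ) * key2 x
  · simp only [opC, opD, L1]
    rw [lap_W hφ1 (γ σ) σ x]
    rw [pd_conj σ hdφ1.differentiableAt, pd_conj σ hdφ2.differentiableAt]
    refine RingHom.injective (starRingEnd ℂ) ?_
    simp only [map_add, map_sub, map_neg, map_mul, map_div₀, map_pow, map_sum, map_one,
      map_ofNat, Complex.conj_conj, Complex.conj_ofReal]
    push_cast [hns2]
    linear_combination h1d + ((γ σ : ℝ):ℂ) * ((x σ : ℝ):ℂ) * key1 x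
  · simp only [opC, opD, L2]
    rw [lap_W hφ2 (γ σ) σ x]
    rw [pd_conj σ hdφ1.differentiableAt, pd_conj σ hdφ2.differentiableAt]
    refine RingHom.injective (starRingEnd ℂ) ?_
    simp only [map_add, map_sub, map_neg, map_mul, map_div₀, map_pow, map_sum, map_one,
      map_ofNat, Complex.conj_conj, Complex.conj_ofReal]
    push_cast [hns2]
    linear_combination h2d + ((γ σ : ℝ):ℂ) * ((x σ : ℝ):ℂ) * key2 x
end
end

section
/- Let H₊ and H₋ be Hermitian n×n complex matrices, let ω₁, ω₂ ∈ ℝ with |ω₁| ≠ |ω₂|, and let f₁, g₁, f₂, g₂ ∈ ℂⁿ satisfy the coupled eigenvalue equations H₋g_i = ω_i f_i and H₊f_i = ω_i g_i for i = 1, 2. Then ⟨f₁, g₂⟩ = 0 and ⟨f₂, g₁⟩ = 0, where ⟨·,·⟩ is the standard Hermitian inner product on ℂⁿ. -/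
/- STATEMENT 11 (biorthogonality): for Hermitian H₊, H₋ and eigenpairs
H₋gᵢ = ωᵢfᵢ, H₊fᵢ = ωᵢgᵢ with |ω₁| ≠ |ω₂|, one has ⟨f₁,g₂⟩ = ⟨f₂,g₁⟩ = 0. -/

open Matrix

lemma herm_swap {n : ℕ} {M : Matrix (Fin n) (Fin n) ℂ} (hM : M.IsHermitian)
    (x y : Fin n → ℂ) : (M.mulVec x) ⬝ᵥ star y = x ⬝ᵥ star (M.mulVec y) := by
  rw [dotProduct_comm, dotProduct_mulVec, dotProduct_comm, star_mulVec, hM.eq]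

theorem biorthogonality
    (n : ℕ) (Hp Hm : Matrix (Fin n) (Fin n) ℂ)
    (hHp : Hp.IsHermitian) (hHm : Hm.IsHermitian)
    (ω1 ω2 : ℝ) (hω : |ω1| ≠ |ω2|)
    (f1 g1 f2 g2 : Fin n → ℂ)
    (h1 : Hm.mulVec g1 = (ω1 : ℂ) • f1) (h2 : Hp.mulVec f1 = (ω1 : ℂ) • g1)
    (h3 : Hm.mulVec g2 = (ω2 : ℂ) • f2) (h4 : Hp.mulVec f2 = (ω2 : ℂ) • g2) :
    f1 ⬝ᵥ star g2 = 0 ∧ f2 ⬝ᵥ star g1 = 0 := by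
  set A : ℂ := f1 ⬝ᵥ star g2 with hA
  set B : ℂ := g1 ⬝ᵥ star f2 with hB
  have hstar2 : star ((ω2 : ℂ) • g2) = (ω2 : ℂ) • star g2 := by
    rw [star_smul]; simp
  have hstarf2 : star ((ω2 : ℂ) • f2) = (ω2 : ℂ) • star f2 := by
    rw [star_smul]; simp
  have e1 : (ω1 : ℂ) * B = (ω2 : ℂ) * A := by
    have := herm_swap hHp f1 f2
    rw [h2, h4, hstar2] at this
    simpa [smul_dotProduct, dotProduct_smul, smul_eq_mul] using this
  have e2 : (ω1 : ℂ) * A = (ω2 : ℂ) * B := by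
    have := herm_swap hHm g1 g2
    rw [h1, h3, hstarf2] at this
    simpa [smul_dotProduct, dotProduct_smul, smul_eq_mul, dotProduct_comm,
      hA, hB] using this
  have hsq : ((ω1 : ℂ)^2 - (ω2 : ℂ)^2) * A = 0 := by
    linear_combination (ω1 : ℂ) * e2 + (ω2 : ℂ) * e1
  have hne : ((ω1 : ℂ)^2 - (ω2 : ℂ)^2) ≠ 0 := by
    intro h
    apply hω
    have : (ω1 : ℂ)^2 = (ω2 : ℂ)^2 := by linear_combination h
    have hr : ω1^2 = ω2^2 := by exact_mod_cast this
    rw [← Real.sqrt_sq_eq_abs, ← Real.sqrt_sq_eq_abs, hr]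
  have hA0 : A = 0 := by
    have := mul_eq_zero.mp hsq
    tauto
  have hB0 : B = 0 := by
    rcases eq_or_ne (ω1 : ℂ) 0 with h0 | h0
    · have hω2 : (ω2 : ℂ) ≠ 0 := by
        intro h2'
        apply hω
        have : ω1 = 0 := by exact_mod_cast h0
        have : ω2 = 0 := by exact_mod_cast h2'
        simp_all
      have : (ω2 : ℂ) * B = 0 := by rw [← e2, hA0, mul_zero]
      exact (mul_eq_zero.mp this).resolve_left hω2
    · have : (ω1 : ℂ) * B = 0 := by rw [e1, hA0, mul_zero]
      exact (mul_eq_zero.mp this).resolve_left h0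
  refine ⟨hA0, ?_⟩
  have : f2 ⬝ᵥ star g1 = star B := by
    rw [hB]
    simp [dotProduct, Finset.sum_comm, mul_comm]
  rw [this, hB0, star_zero]
end

section
/- Let H₊ and H₋ be Hermitian n×n complex matrices such that H₊ is positive definite and the kernel of H₋ equals the span of a single nonzero vector φ ∈ ℂⁿ. Let H : ℂⁿ × ℂⁿ → ℂⁿ × ℂⁿ be the linear map H(f, g) = (H₋g, H₊f). Then: (i) ker(H) = {0} × span{φ}; (ii) ker(H²) = ker(H) ⊕ span{(H₊⁻¹φ, 0)}; (iii) ker(H³) = ker(H²). In particular, the generalized nullspace of H equals ker(H²) and has dimension 2. -/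
/-!
`H` exchanges the two blocks, so each power of `H` is block diagonal or block antidiagonal and its
kernel is a product of kernels of words in `H₋` and `H₊`. Since `H₊` is injective, these reduce to
`ker (H₋ H₊) = H₊⁻¹ (ker H₋) = span {H₊⁻¹ φ}` and `ker (H₋ H₊ H₋) = ker H₋`. For the latter, if
`H₋ H₊ H₋ g = 0` then `⟪H₋ g, H₊ H₋ g⟫ = ⟪g, H₋ H₊ H₋ g⟫ = 0` because `H₋` is Hermitian, and positive
definiteness of `H₊` forces `H₋ g = 0`.
-/

open Matrix
open scoped ComplexOrder

open LinearMap Submodule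

theorem Submodule.finrank_prod {K V W : Type*} [DivisionRing K] [AddCommGroup V] [Module K V]
    [AddCommGroup W] [Module K W] (p : Submodule K V) (q : Submodule K W)
    [FiniteDimensional K p] [FiniteDimensional K q] :
    Module.finrank K (p.prod q) = Module.finrank K p + Module.finrank K q :=
  calc Module.finrank K (p.prod q)
      = Module.finrank K (range (p.subtype.prodMap q.subtype)) := by
        rw [range_prodMap, range_subtype, range_subtype]
    _ = Module.finrank K (p × q) :=
        finrank_range_of_inj (p.injective_subtype.prodMap q.injective_subtype)
    _ = Module.finrank K p + Module.finrank K q := Module.finrank_prod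

section Module

variable {R M N : Type*} [Semiring R] [AddCommMonoid M] [AddCommMonoid N] [Module R M]
  [Module R N]

theorem Submodule.span_singleton_prod_bot (x : M) :
    span R {((x, 0) : M × N)} = (span R {x}).prod ⊥ := by
  rw [← map_inl, map_span, Set.image_singleton, inl_apply]

theorem Submodule.comap_span_singleton_apply_of_injective {f : M →ₗ[R] N}
    (hf : Function.Injective f) (x : M) : (span R {f x}).comap f = span R {x} := by
  rw [← Set.image_singleton, ← map_span, comap_map_eq_of_injective hf]

variable {A : N →ₗ[R] M} {B : M →ₗ[R] N} {H : Module.End R (M × N)}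

theorem LinearMap.ker_eq_prod_of_apply_eq_swap (hH : ∀ x, H x = (A x.2, B x.1)) :
    ker H = (ker B).prod (ker A) := by
  ext ⟨f, g⟩
  simp [hH, and_comm]

theorem LinearMap.ker_sq_eq_prod_of_apply_eq_swap (hH : ∀ x, H x = (A x.2, B x.1)) :
    ker (H ^ 2) = (ker (A ∘ₗ B)).prod (ker (B ∘ₗ A)) := by
  have hH2 : H ^ 2 = (A ∘ₗ B).prodMap (B ∘ₗ A) := by
    refine LinearMap.ext fun x => ?_
    rw [sq, Module.End.mul_apply, hH, hH]
    rfl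
  rw [hH2, ker_prodMap]

theorem LinearMap.ker_pow_three_eq_prod_of_apply_eq_swap (hH : ∀ x, H x = (A x.2, B x.1)) :
    ker (H ^ 3) = (ker (B ∘ₗ A ∘ₗ B)).prod (ker (A ∘ₗ B ∘ₗ A)) := by
  refine ker_eq_prod_of_apply_eq_swap fun x => ?_
  rw [pow_succ, Module.End.mul_apply, hH, sq, Module.End.mul_apply, hH, hH]
  rfl

end Module

theorem Matrix.IsHermitian.ker_mul_posDef_mul {n R : Type*} [Fintype n] [CommRing R]
    [PartialOrder R] [StarRing R] {M P : Matrix n n R} (hM : M.IsHermitian) (hP : P.PosDef) :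
    ker (M * P * M).mulVecLin = ker M.mulVecLin := by
  ext v
  simp only [mem_ker, mulVecLin_apply, ← mulVec_mulVec]
  refine ⟨fun h => ?_, fun h => by rw [h, mulVec_zero, mulVec_zero]⟩
  by_contra hMv
  have hpos := hP.dotProduct_mulVec_pos hMv
  rw [star_mulVec, ← dotProduct_mulVec, hM.eq, h, dotProduct_zero] at hpos
  exact hpos.ne rfl

theorem generalized_nullspace_with_josephson_general
    (n : ℕ) (Hp Hm : Matrix (Fin n) (Fin n) ℂ)
    (hHm : Hm.IsHermitian) (hHp : Hp.PosDef)
    (φ : Fin n → ℂ) (hφ : φ ≠ 0)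
    (hker : LinearMap.ker Hm.mulVecLin = Submodule.span ℂ {φ})
    (H : Module.End ℂ ((Fin n → ℂ) × (Fin n → ℂ)))
    (hH : ∀ fg : (Fin n → ℂ) × (Fin n → ℂ), H fg = (Hm.mulVec fg.2, Hp.mulVec fg.1)) :
    LinearMap.ker H = Submodule.prod ⊥ (Submodule.span ℂ {φ})
    ∧ LinearMap.ker (H ^ 2)
        = LinearMap.ker H ⊔ Submodule.span ℂ {((Hp⁻¹.mulVec φ, 0) : (Fin n → ℂ) × (Fin n → ℂ))}
    ∧ Disjoint (LinearMap.ker H)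
        (Submodule.span ℂ {((Hp⁻¹.mulVec φ, 0) : (Fin n → ℂ) × (Fin n → ℂ))})
    ∧ LinearMap.ker (H ^ 3) = LinearMap.ker (H ^ 2)
    ∧ Module.finrank ℂ (LinearMap.ker (H ^ 2)) = 2 := by
  set v := Hp⁻¹ *ᵥ φ
  replace hH : ∀ x, H x = (Hm.mulVecLin x.2, Hp.mulVecLin x.1) := hH
  have hHp_inj : Function.Injective Hp.mulVecLin := mulVec_injective_iff_isUnit.mpr hHp.isUnit
  have hHp_ker : ker Hp.mulVecLin = ⊥ := ker_eq_bot.mpr hHp_inj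
  have hv : Hp.mulVecLin v = φ := by
    rw [mulVecLin_apply, mulVec_mulVec,
      mul_nonsing_inv _ ((isUnit_iff_isUnit_det Hp).mp hHp.isUnit), one_mulVec]
  have hker1 : ker H = (⊥ : Submodule ℂ _).prod (span ℂ {φ}) := by
    rw [ker_eq_prod_of_apply_eq_swap hH, hHp_ker, hker]
  have hker2 : ker (H ^ 2) = (span ℂ {v}).prod (span ℂ {φ}) := by
    rw [ker_sq_eq_prod_of_apply_eq_swap hH, ker_comp, ker_comp_of_ker_eq_bot _ hHp_ker, hker,
      ← hv, comap_span_singleton_apply_of_injective hHp_inj]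
  have hHmHpHm : ker (Hm.mulVecLin ∘ₗ Hp.mulVecLin ∘ₗ Hm.mulVecLin) = ker Hm.mulVecLin := by
    rw [← comp_assoc, ← mulVecLin_mul, ← mulVecLin_mul, hHm.ker_mul_posDef_mul hHp]
  refine ⟨hker1, ?_, ?_, ?_, ?_⟩
  · rw [hker2, hker1, span_singleton_prod_bot, prod_sup_prod, bot_sup_eq, sup_bot_eq]
  · rw [hker1, span_singleton_prod_bot, disjoint_iff, prod_inf_prod, bot_inf_eq, inf_bot_eq,
      prod_bot]
  · rw [ker_pow_three_eq_prod_of_apply_eq_swap hH, ker_sq_eq_prod_of_apply_eq_swap hH,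
      ker_comp_of_ker_eq_bot _ hHp_ker, ker_comp_of_ker_eq_bot _ hHp_ker, hHmHpHm]
  · have hv0 : v ≠ 0 := fun h => hφ (by rw [← hv, h, map_zero])
    rw [hker2, finrank_prod, finrank_span_singleton hv0, finrank_span_singleton hφ]

theorem generalized_nullspace_with_josephson
    (n : ℕ) (Hp Hm : Matrix (Fin n) (Fin n) ℂ)
    (hHm : Hm.IsHermitian) (hHpHerm : Hp.IsHermitian) (hHp : Hp.PosDef)
    (φ : Fin n → ℂ) (hφ : φ ≠ 0)
    (hker : LinearMap.ker Hm.mulVecLin = Submodule.span ℂ {φ})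
    (H : Module.End ℂ ((Fin n → ℂ) × (Fin n → ℂ)))
    (hH : ∀ fg : (Fin n → ℂ) × (Fin n → ℂ), H fg = (Hm.mulVec fg.2, Hp.mulVec fg.1)) :
    LinearMap.ker H = Submodule.prod ⊥ (Submodule.span ℂ {φ})
    ∧ LinearMap.ker (H ^ 2)
        = LinearMap.ker H ⊔ Submodule.span ℂ {((Hp⁻¹.mulVec φ, 0) : (Fin n → ℂ) × (Fin n → ℂ))}
    ∧ Disjoint (LinearMap.ker H)
        (Submodule.span ℂ {((Hp⁻¹.mulVec φ, 0) : (Fin n → ℂ) × (Fin n → ℂ))})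
    ∧ LinearMap.ker (H ^ 3) = LinearMap.ker (H ^ 2)
    ∧ Module.finrank ℂ (LinearMap.ker (H ^ 2)) = 2 :=
  generalized_nullspace_with_josephson_general n Hp Hm hHm hHp φ hφ hker H hH
end
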